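/- arXiv:1012.0931 — 4 statements merged into one kernel-verified Lean document; each statement's English description precedes it below -/
import Mathlib

section
/- Let alpha_1, ..., alpha_d be pairwise non-proportional linear forms in C[x,y,z], alpha their product, and l_i = alpha/alpha_i. If p is a point lying on exactly the lines V(alpha_1),...,V(alpha_m) (m >= 2) and on none of the others, then after localizing at the ideal of p, the ideal generated by l_1,...,l_d equals the (m-1)-st power of the maximal ideal of p localized, i.e., the localization of I_p^{m-1}. -/
/-!
Any two of the lines through `p` generate `I_p`, because the linear forms vanishing at `p` form a
plane. For elements `L_1, …, L_m` any two of which generate an ideal `I`, the products omitting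
one factor generate `I ^ (m - 1)`: by induction, dropping `L_i` or `L_j` yields `L_i I ^ (m - 2)`
and `L_j I ^ (m - 2)`, whose sum is `I ^ (m - 1)`. After localizing at `I_p` the lines not through
`p` become units, so `l_i` is a unit multiple of the product of the lines through `p` other
than `V(α_i)`, and `l_i ∈ I_p ^ (m - 1)` for every `i`.
-/

open MvPolynomial

section ProdErase

variable {R ι : Type*} [CommRing R] [DecidableEq ι]

theorem Ideal.mul_mem_span_prod_erase {L : ι → R} {s : Finset ι} {i : ι} (hi : i ∈ s) {x : R}
    (hx : x ∈ Ideal.span ((fun k => ∏ j ∈ (s.erase i).erase k, L j) '' s.erase i)) :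
    L i * x ∈ Ideal.span ((fun k => ∏ j ∈ s.erase k, L j) '' s) := by
  have h := Ideal.mul_mem_mul (Ideal.mem_span_singleton_self (L i)) hx
  rw [Ideal.span_mul_span', Set.singleton_mul] at h
  refine Ideal.span_mono ?_ h
  rintro _ ⟨_, ⟨k, hk, rfl⟩, rfl⟩
  refine ⟨k, Finset.mem_of_mem_erase hk, ?_⟩
  dsimp only
  rw [Finset.erase_right_comm,
    Finset.mul_prod_erase _ _ (Finset.mem_erase.2 ⟨(Finset.ne_of_mem_erase hk).symm, hi⟩)]

theorem Ideal.pow_card_sub_one_le_span_prod_erase {I : Ideal R} {L : ι → R} {s : Finset ι}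
    (hs : s.Nonempty) (hL : ∀ i ∈ s, ∀ j ∈ s, i ≠ j → I ≤ Ideal.span {L i, L j}) :
    I ^ (s.card - 1) ≤ Ideal.span ((fun i => ∏ k ∈ s.erase i, L k) '' s) := by
  induction s using Finset.strongInduction with
  | H s ih =>
  obtain ⟨i, rfl⟩ | hnt := hs.exists_eq_singleton_or_nontrivial
  · simp
  have ⟨i, hi, j, hj, hij⟩ := hnt
  have hcard : s.card - 1 = s.card - 2 + 1 := by
    have := Finset.one_lt_card_iff_nontrivial.2 hnt
    omega
  have hmul : ∀ k ∈ s, ∀ x ∈ I ^ (s.card - 2), L k * x ∈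
      Ideal.span ((fun i => ∏ k ∈ s.erase i, L k) '' s) := by
    intro k hk x hx
    refine Ideal.mul_mem_span_prod_erase hk (ih _ (Finset.erase_ssubset hk) ?_ ?_ ?_)
    · exact hnt.erase_nonempty
    · exact fun a ha b hb => hL a (Finset.mem_of_mem_erase ha) b (Finset.mem_of_mem_erase hb)
    · rwa [Finset.card_erase_of_mem hk, Nat.sub_sub]
  rw [hcard, pow_succ']
  refine (Ideal.mul_mono_left (hL i hi j hj hij)).trans (Ideal.mul_le.2 fun r hr x hx => ?_)
  obtain ⟨u, v, rfl⟩ := Ideal.mem_span_pair.1 hr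
  rw [add_mul, mul_assoc, mul_assoc]
  exact add_mem (Ideal.mul_mem_left _ _ (hmul i hi x hx)) (Ideal.mul_mem_left _ _ (hmul j hj x hx))

end ProdErase

theorem Localization.AtPrime.map_span_prod_erase_eq_map_pow {R ι : Type*} [CommRing R]
    [Fintype ι] [DecidableEq ι] (P : Ideal R) [P.IsPrime] (α : ι → R) (s : Finset ι)
    (hs : ∀ i, α i ∈ P ↔ i ∈ s) (hne : s.Nonempty)
    (hpair : ∀ i ∈ s, ∀ j ∈ s, i ≠ j → P ≤ Ideal.span {α i, α j}) :
    Ideal.map (algebraMap R (Localization.AtPrime P))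
        (Ideal.span (Set.range fun i => ∏ k ∈ Finset.univ.erase i, α k))
      = Ideal.map (algebraMap R (Localization.AtPrime P)) (P ^ (s.card - 1)) := by
  set F := algebraMap R (Localization.AtPrime P)
  have hsplit : ∀ i, ∏ k ∈ Finset.univ.erase i, α k =
      (∏ k ∈ Finset.univ.erase i \ s.erase i, α k) * ∏ k ∈ s.erase i, α k := fun i =>
    (Finset.prod_sdiff (Finset.erase_subset_erase _ s.subset_univ)).symm
  refine le_antisymm (Ideal.map_mono (Ideal.span_le.2 ?_)) ?_
  · rintro _ ⟨i, rfl⟩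
    dsimp only
    rw [SetLike.mem_coe, hsplit]
    refine Ideal.mul_mem_left _ _
      (Ideal.pow_le_pow_right (Finset.pred_card_le_card_erase (a := i)) ?_)
    simpa using Ideal.prod_mem_prod (I := fun _ => P) fun k hk =>
      (hs k).2 (Finset.mem_of_mem_erase hk)
  rw [Ideal.map_pow]
  refine (Ideal.pow_card_sub_one_le_span_prod_erase (L := F ∘ α) hne
    fun i hi j hj hij => ?_).trans (Ideal.span_le.2 ?_)
  · simpa [Ideal.map_span, Set.image_pair] using Ideal.map_mono (f := F) (hpair i hi j hj hij)
  rintro _ ⟨i, hi, rfl⟩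
  have hunit : IsUnit (F (∏ k ∈ Finset.univ.erase i \ s.erase i, α k)) := by
    refine (IsLocalization.AtPrime.isUnit_to_map_iff _ P _).2 fun hmem => ?_
    obtain ⟨k, hk, hkP⟩ := Ideal.IsPrime.prod_mem_iff.1 hmem
    rw [Finset.mem_sdiff, Finset.mem_erase, Finset.mem_erase] at hk
    exact hk.2 ⟨hk.1.1, (hs k).1 hkP⟩
  simp only [SetLike.mem_coe, Function.comp_apply, ← map_prod]
  rw [← Ideal.mul_unit_mem_iff_mem _ hunit, ← map_mul, mul_comm, ← hsplit]
  exact Ideal.mem_map_of_mem F (Ideal.subset_span ⟨i, rfl⟩)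

theorem Module.Dual.ker_eq_span_pair {K V : Type*} [Field K] [AddCommGroup V] [Module K V]
    [FiniteDimensional K V] (hV : Module.finrank K V = 3) {φ : Module.Dual K V} (hφ : φ ≠ 0)
    {a b : V} (ha : φ a = 0) (hb : φ b = 0) (hab : LinearIndependent K ![a, b]) :
    LinearMap.ker φ = Submodule.span K {a, b} := by
  symm
  refine Submodule.eq_of_le_of_finrank_eq ?_ ?_
  · rw [Submodule.span_le]
    rintro x (rfl | rfl) <;> assumption
  · have h := φ.finrank_ker_add_one_of_ne_zero hφ
    have h2 := finrank_span_eq_card hab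
    rw [Matrix.range_cons, Matrix.range_cons, Matrix.range_empty, Set.union_empty,
      Set.singleton_union] at h2
    simp only [Fintype.card_fin] at h2
    omega

theorem MvPolynomial.IsHomogeneous.exists_eq_sum_C_mul_X {R σ : Type*} [CommSemiring R]
    [Fintype σ] {φ : MvPolynomial σ R} (h : φ.IsHomogeneous 1) :
    ∃ c : σ → R, φ = ∑ k, C (c k) * X k := by
  have hφ : φ ∈ Submodule.span R (Set.range X) := by
    rwa [← homogeneousSubmodule_one_eq_span_X]
  obtain ⟨c, hc⟩ := (Submodule.mem_span_range_iff_exists_fun R).1 hφ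
  exact ⟨c, by simp [← hc, smul_eq_C_mul]⟩

theorem MvPolynomial.linearIndependent_pair_of_forall_ne_C_mul {K σ : Type*} [Field K]
    {a b : MvPolynomial σ K} (hab : ∀ c, a ≠ C c * b) (hba : ∀ c, b ≠ C c * a) :
    LinearIndependent K ![a, b] := by
  have ha : a ≠ 0 := by simpa using hab 0
  refine (LinearIndependent.pair_iff' ha).2 fun c => ?_
  simpa [smul_eq_C_mul, eq_comm] using hba c

theorem MvPolynomial.mem_span_linearForms_vanishing_iff {R σ : Type*} [CommRing R] [Fintype σ]
    {p : σ → R} {a : MvPolynomial σ R} (ha : a.IsHomogeneous 1) :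
    a ∈ Ideal.span {f | (∃ c : σ → R, f = ∑ k, C (c k) * X k) ∧ eval p f = 0} ↔
      eval p a = 0 := by
  refine ⟨fun h => ?_, fun h => Ideal.subset_span ⟨ha.exists_eq_sum_C_mul_X, h⟩⟩
  exact (Ideal.span_le (I := RingHom.ker (eval p)) |>.2 fun f hf => hf.2) h

theorem MvPolynomial.span_linearForms_vanishing_le_span_pair {K σ : Type*} [Field K] [Fintype σ]
    (hσ : Fintype.card σ = 3) {p : σ → K} (hp : p ≠ 0) {a b : MvPolynomial σ K}
    (ha : a.IsHomogeneous 1) (hb : b.IsHomogeneous 1) (hap : eval p a = 0) (hbp : eval p b = 0)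
    (hab : LinearIndependent K ![a, b]) :
    Ideal.span {f | (∃ c : σ → K, f = ∑ k, C (c k) * X k) ∧ eval p f = 0} ≤
      Ideal.span {a, b} := by
  classical
  set lf := Fintype.linearCombination K (X : σ → MvPolynomial σ K)
  have hlf : ∀ c, lf c = ∑ k, C (c k) * X k := fun c => by
    simp [lf, Fintype.linearCombination_apply, smul_eq_C_mul]
  set φ : Module.Dual K (σ → K) := (aeval p).toLinearMap ∘ₗ lf
  have hφ : φ ≠ 0 := by
    obtain ⟨k, hk⟩ := Function.ne_iff.1 hp
    refine fun h => hk ?_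
    simpa [φ, lf] using LinearMap.congr_fun h (Pi.single k 1)
  have hrange : ∀ f : MvPolynomial σ K, f.IsHomogeneous 1 → ∃ c, lf c = f := fun f hf => by
    obtain ⟨c, rfl⟩ := hf.exists_eq_sum_C_mul_X
    exact ⟨c, hlf c⟩
  obtain ⟨a', rfl⟩ := hrange a ha
  obtain ⟨b', rfl⟩ := hrange b hb
  have hker := φ.ker_eq_span_pair (by simp [hσ]) hφ hap hbp
    (.of_comp lf (by convert hab using 1; ext i; fin_cases i <;> rfl))
  rw [Ideal.span_le]
  rintro _ ⟨⟨c, rfl⟩, hc⟩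
  rw [← hlf] at hc ⊢
  have hcker : c ∈ LinearMap.ker φ := hc
  rw [hker] at hcker
  obtain ⟨u, v, huv⟩ := Submodule.mem_span_pair.1 hcker
  rw [← huv, map_add, map_smul, map_smul, smul_eq_C_mul, smul_eq_C_mul]
  exact Ideal.mem_span_pair.2 ⟨_, _, rfl⟩

/-- Lemma 3.1: if `p` lies exactly on the lines `V(α_1),…,V(α_m)` (indices
`i < m`, with `m ≥ 2`) of the arrangement `V(α_1 ⋯ α_d)` and on none of the
others, then after localizing at the homogeneous prime `I_p` of the point,
the ideal generated by `l_i = α/α_i` equals the localization of `I_p^{m-1}`. -/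
theorem localization_of_OT_ideal (d m : ℕ) (hm : 2 ≤ m) (hmd : m ≤ d)
    (α : Fin d → MvPolynomial (Fin 3) ℂ)
    (hlin : ∀ i, (α i).IsHomogeneous 1)
    (hnp : ∀ i j : Fin d, i ≠ j → ∀ c : ℂ, α i ≠ MvPolynomial.C c * α j)
    (p : Fin 3 → ℂ) (hp : p ≠ 0)
    (hvan : ∀ i : Fin d, MvPolynomial.eval p (α i) = 0 ↔ (i : ℕ) < m)
    (Ip : Ideal (MvPolynomial (Fin 3) ℂ))
    (hIp : Ip = Ideal.span {f : MvPolynomial (Fin 3) ℂ |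
      (∃ c : Fin 3 → ℂ, f = ∑ k, MvPolynomial.C (c k) * MvPolynomial.X k) ∧
      MvPolynomial.eval p f = 0})
    [Ip.IsPrime]
    (l : Fin d → MvPolynomial (Fin 3) ℂ)
    (hl : ∀ i, l i = ∏ k ∈ Finset.univ.erase i, α k) :
    Ideal.map (algebraMap (MvPolynomial (Fin 3) ℂ) (Localization.AtPrime Ip))
        (Ideal.span (Set.range l))
      = Ideal.map (algebraMap (MvPolynomial (Fin 3) ℂ) (Localization.AtPrime Ip))
        (Ip ^ (m - 1)) := by
  classical
  set s : Finset (Fin d) := {i | (i : ℕ) < m}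
  have hvan_s : ∀ i, eval p (α i) = 0 ↔ i ∈ s := fun i => by simp [s, hvan]
  have hs : ∀ i, α i ∈ Ip ↔ i ∈ s := fun i => by
    rw [hIp, mem_span_linearForms_vanishing_iff (hlin i), hvan_s]
  have hpair : ∀ i ∈ s, ∀ j ∈ s, i ≠ j → Ip ≤ Ideal.span {α i, α j} := by
    intro i hi j hj hij
    exact hIp ▸ span_linearForms_vanishing_le_span_pair (by simp) hp (hlin i) (hlin j)
      ((hvan_s i).2 hi) ((hvan_s j).2 hj)
      (linearIndependent_pair_of_forall_ne_C_mul (hnp i j hij) (hnp j i hij.symm))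
  have hcard : s.card = m := by simp [s, Fin.card_filter_val_lt, hmd]
  rw [show l = _ from funext hl, ← hcard]
  exact Localization.AtPrime.map_span_prod_erase_eq_map_pow Ip α s hs
    ⟨⟨0, by omega⟩, by simp [s]; omega⟩ hpair
end

section
/- Suppose (A_w, Z) is a weak (k,m)-multinet on a multiarrangement of lines in P^2 with k >= 3. Then sum over p in Z of n_p^2 equals m^2. -/
/-! Two lines from different classes meet in exactly one point of `Z`, so counting the weighted
pairs `(L, L') ∈ A₁ × A₂` by their meeting point gives `∑ p, n_p · n_p = m · m`. -/

open Finset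

section DoubleCounting

variable {Point Line R : Type*} [NonUnitalNonAssocSemiring R]
  (onLine : Point → Line → Prop) [∀ p L, Decidable (onLine p L)]

theorem sum_filter_mul_sum_filter_eq_sum_ite (s t : Finset Line) (p : Point) (f g : Line → R) :
    (∑ L ∈ s with onLine p L, f L) * (∑ L' ∈ t with onLine p L', g L') =
      ∑ L ∈ s, ∑ L' ∈ t, if onLine p L ∧ onLine p L' then f L * g L' else 0 := by
  simp only [sum_filter, sum_mul_sum, ite_and, ite_mul, zero_mul, mul_ite, mul_zero]
  exact sum_congr rfl fun L _ => by split_ifs <;> simp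

theorem sum_mul_sum_eq_sum_incidences (Z : Finset Point) (s t : Finset Line) (f g : Line → R)
    (hmeet : ∀ L ∈ s, ∀ L' ∈ t, ∃! p, p ∈ Z ∧ onLine p L ∧ onLine p L') :
    ∑ p ∈ Z, (∑ L ∈ s with onLine p L, f L) * (∑ L' ∈ t with onLine p L', g L') =
      (∑ L ∈ s, f L) * ∑ L' ∈ t, g L' := by
  have hpoint : ∀ L ∈ s, ∀ L' ∈ t,
      ∑ p ∈ Z, (if onLine p L ∧ onLine p L' then f L * g L' else 0) = f L * g L' := by
    intro L hL L' hL'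
    obtain ⟨p₀, ⟨hp₀Z, hp₀⟩, huniq⟩ := hmeet L hL L' hL'
    rw [sum_eq_single_of_mem p₀ hp₀Z fun p hpZ hp => if_neg fun h => hp (huniq p ⟨hpZ, h⟩),
      if_pos hp₀]
  simp only [sum_filter_mul_sum_filter_eq_sum_ite]
  rw [sum_comm, sum_mul_sum]
  exact sum_congr rfl fun L hL => (sum_comm).trans (sum_congr rfl (hpoint L hL))

end DoubleCounting

theorem weak_multinet_sum_np_sq_general {Line Point : Type*}
    (A : Finset Line) (w : Line → ℕ)
    (onLine : Point → Line → Prop) [∀ p L, Decidable (onLine p L)]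
    (hplane : ∀ L₁ ∈ A, ∀ L₂ ∈ A, L₁ ≠ L₂ →
      ∃! p : Point, onLine p L₁ ∧ onLine p L₂)
    (k m : ℕ) (hk : 3 ≤ k)
    (cls : Fin k → Finset Line)
    (hcover : ∀ L, L ∈ A ↔ ∃ i, L ∈ cls i)
    (hdisj : ∀ i j, i ≠ j → Disjoint (cls i) (cls j))
    (Z : Finset Point)
    (h1 : ∀ i, ∑ L ∈ cls i, w L = m)
    (h2 : ∀ i j, i ≠ j → ∀ L ∈ cls i, ∀ L' ∈ cls j,
      ∃ p ∈ Z, onLine p L ∧ onLine p L')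
    (n : Point → ℕ)
    (h3 : ∀ p ∈ Z, ∀ i, ∑ L ∈ (cls i).filter (fun L => onLine p L), w L = n p) :
    ∑ p ∈ Z, (n p) ^ 2 = m ^ 2 := by
  let i : Fin k := ⟨0, by omega⟩
  let j : Fin k := ⟨1, by omega⟩
  have hij : i ≠ j := by simp [i, j, Fin.ext_iff]
  have hmeet : ∀ L ∈ cls i, ∀ L' ∈ cls j, ∃! p, p ∈ Z ∧ onLine p L ∧ onLine p L' := by
    intro L hL L' hL'
    obtain ⟨p, hpZ, hp⟩ := h2 i j hij L hL L' hL'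
    have hLL' : L ≠ L' := fun h => disjoint_left.1 (hdisj i j hij) hL (h ▸ hL')
    obtain ⟨q, -, huniq⟩ :=
      hplane L ((hcover L).2 ⟨i, hL⟩) L' ((hcover L').2 ⟨j, hL'⟩) hLL'
    exact ⟨p, ⟨hpZ, hp⟩, fun p' hp' => (huniq p' hp'.2).trans (huniq p hp).symm⟩
  calc ∑ p ∈ Z, n p ^ 2
      = ∑ p ∈ Z, (∑ L ∈ cls i with onLine p L, w L) * ∑ L' ∈ cls j with onLine p L', w L' :=
        sum_congr rfl fun p hp => by rw [h3 p hp, h3 p hp, sq]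
    _ = m ^ 2 := by rw [sum_mul_sum_eq_sum_incidences onLine Z _ _ w w hmeet, h1, h1, sq]

/-- Lemma 4.5(2): for a weak `(k,m)`-multinet `(A_w, Z)` on a multiarrangement
of lines in `ℙ²`, `∑_{p ∈ Z} n_p² = m²`.
The multiarrangement is a finite set `A` of lines with positive weights `w`,
partitioned into `k ≥ 3` classes `cls i`, each of total weight `m`; any two
lines from different classes meet at a point of `Z`; for each `p ∈ Z` the
weight of the lines of `cls i` through `p` is a constant `n p` independent
of `i`.  Distinct lines of the plane meet in a unique point. -/
theorem weak_multinet_sum_np_sq {Line Point : Type*} [DecidableEq Line]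
    (A : Finset Line) (w : Line → ℕ) (hw : ∀ L ∈ A, 1 ≤ w L)
    (onLine : Point → Line → Prop) [∀ p L, Decidable (onLine p L)]
    (hplane : ∀ L₁ ∈ A, ∀ L₂ ∈ A, L₁ ≠ L₂ →
      ∃! p : Point, onLine p L₁ ∧ onLine p L₂)
    (k m : ℕ) (hk : 3 ≤ k)
    (cls : Fin k → Finset Line)
    (hcover : ∀ L, L ∈ A ↔ ∃ i, L ∈ cls i)
    (hdisj : ∀ i j, i ≠ j → Disjoint (cls i) (cls j))
    (Z : Finset Point)
    (h1 : ∀ i, ∑ L ∈ cls i, w L = m)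
    (h2 : ∀ i j, i ≠ j → ∀ L ∈ cls i, ∀ L' ∈ cls j,
      ∃ p ∈ Z, onLine p L ∧ onLine p L')
    (n : Point → ℕ)
    (h3 : ∀ p ∈ Z, ∀ i, ∑ L ∈ (cls i).filter (fun L => onLine p L), w L = n p) :
    ∑ p ∈ Z, (n p) ^ 2 = m ^ 2 :=
  weak_multinet_sum_np_sq_general A w onLine hplane k m hk cls hcover hdisj Z h1 h2 n h3
end

section
/- Suppose (A_w, Z) is a weak (k,m)-multinet on a multiarrangement of lines in P^2 with k >= 3. Then for each line L of the multiarrangement, the sum over points p in Z lying on L of n_p equals m. -/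
/-!
Fix `L` in class `i` and pick another class `j` (possible as `k ≥ 2`). Every line `L'` of class
`j` is distinct from `L` and meets it at a point of `Z`, which is then the unique point of `Z`
on both. Double counting the incidences between the points of `Z` on `L` and the lines of class
`j` therefore gives `∑_{p ∈ Z ∩ L} n_p = ∑_{L' ∈ cls j} w L' = m`.
-/

namespace Finset

theorem sum_sum_filter_eq_sum_of_existsUnique {α β M : Type*} [AddCommMonoid M]
    (s : Finset α) (t : Finset β) (r : α → β → Prop) [∀ a b, Decidable (r a b)] (f : β → M)
    (h : ∀ b ∈ t, ∃! a, a ∈ s ∧ r a b) :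
    ∑ a ∈ s, ∑ b ∈ t.filter (r a), f b = ∑ b ∈ t, f b := by
  simp only [sum_filter]
  rw [sum_comm]
  refine sum_congr rfl fun b hb => ?_
  obtain ⟨a, ha, huniq⟩ := h b hb
  have hfiber : s.filter (r · b) = {a} := by
    ext x
    simp only [mem_filter, mem_singleton]
    exact ⟨huniq x, by rintro rfl; exact ha⟩
  rw [← sum_filter, hfiber, sum_singleton]

end Finset

theorem weak_multinet_line_sum_general {Line Point : Type*} [DecidableEq Line]
    (A : Finset Line) (w : Line → ℕ)
    (onLine : Point → Line → Prop) [∀ p L, Decidable (onLine p L)]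
    (hplane : ∀ L₁ ∈ A, ∀ L₂ ∈ A, L₁ ≠ L₂ →
      ∃! p : Point, onLine p L₁ ∧ onLine p L₂)
    (k m : ℕ) (hk : 3 ≤ k)
    (cls : Fin k → Finset Line)
    (hcover : ∀ L, L ∈ A ↔ ∃ i, L ∈ cls i)
    (hdisj : ∀ i j, i ≠ j → Disjoint (cls i) (cls j))
    (Z : Finset Point)
    (h1 : ∀ i, ∑ L ∈ cls i, w L = m)
    (h2 : ∀ i j, i ≠ j → ∀ L ∈ cls i, ∀ L' ∈ cls j,
      ∃ p ∈ Z, onLine p L ∧ onLine p L')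
    (n : Point → ℕ)
    (h3 : ∀ p ∈ Z, ∀ i, ∑ L ∈ (cls i).filter (fun L => onLine p L), w L = n p) :
    ∀ L ∈ A, ∑ p ∈ Z.filter (fun p => onLine p L), n p = m := by
  intro L hL
  obtain ⟨i, hi⟩ := (hcover L).1 hL
  have : Nontrivial (Fin k) := Fin.nontrivial_iff_two_le.2 (by omega)
  obtain ⟨j, hji⟩ := exists_ne i
  have hmeet : ∀ L' ∈ cls j, ∃! p, p ∈ Z.filter (fun p => onLine p L) ∧ onLine p L' := by
    intro L' hL'
    have hne : L ≠ L' := fun h => Finset.disjoint_left.1 (hdisj i j hji.symm) hi (h ▸ hL')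
    obtain ⟨p, hpZ, hpL, hpL'⟩ := h2 i j hji.symm L hi L' hL'
    obtain ⟨q, -, huniq⟩ := hplane L hL L' ((hcover L').2 ⟨j, hL'⟩) hne
    refine ⟨p, ⟨Finset.mem_filter.2 ⟨hpZ, hpL⟩, hpL'⟩, fun x ⟨hx, hxL'⟩ => ?_⟩
    rw [huniq x ⟨(Finset.mem_filter.1 hx).2, hxL'⟩, huniq p ⟨hpL, hpL'⟩]
  calc ∑ p ∈ Z.filter (fun p => onLine p L), n p
      = ∑ p ∈ Z.filter (fun p => onLine p L), ∑ L' ∈ (cls j).filter (onLine p), w L' :=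
        Finset.sum_congr rfl fun p hp => (h3 p (Finset.mem_filter.1 hp).1 j).symm
    _ = ∑ L' ∈ cls j, w L' := Finset.sum_sum_filter_eq_sum_of_existsUnique _ _ _ _ hmeet
    _ = m := h1 j

/-- Lemma 4.5(3): for a weak `(k,m)`-multinet `(A_w, Z)` on a multiarrangement
of lines in `ℙ²`, for each line `L` of the multiarrangement, `∑_{p ∈ Z, p ∈ L} n_p = m`.
The multiarrangement is a finite set `A` of lines with positive weights `w`,
partitioned into `k ≥ 3` classes `cls i`, each of total weight `m`; any two
lines from different classes meet at a point of `Z`; for each `p ∈ Z` the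
weight of the lines of `cls i` through `p` is a constant `n p` independent
of `i`.  Distinct lines of the plane meet in a unique point. -/
theorem weak_multinet_line_sum {Line Point : Type*} [DecidableEq Line]
    (A : Finset Line) (w : Line → ℕ) (hw : ∀ L ∈ A, 1 ≤ w L)
    (onLine : Point → Line → Prop) [∀ p L, Decidable (onLine p L)]
    (hplane : ∀ L₁ ∈ A, ∀ L₂ ∈ A, L₁ ≠ L₂ →
      ∃! p : Point, onLine p L₁ ∧ onLine p L₂)
    (k m : ℕ) (hk : 3 ≤ k)
    (cls : Fin k → Finset Line)
    (hcover : ∀ L, L ∈ A ↔ ∃ i, L ∈ cls i)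
    (hdisj : ∀ i j, i ≠ j → Disjoint (cls i) (cls j))
    (Z : Finset Point)
    (h1 : ∀ i, ∑ L ∈ cls i, w L = m)
    (h2 : ∀ i j, i ≠ j → ∀ L ∈ cls i, ∀ L' ∈ cls j,
      ∃ p ∈ Z, onLine p L ∧ onLine p L')
    (n : Point → ℕ)
    (h3 : ∀ p ∈ Z, ∀ i, ∑ L ∈ (cls i).filter (fun L => onLine p L), w L = n p) :
    ∀ L ∈ A, ∑ p ∈ Z.filter (fun p => onLine p L), n p = m :=
  weak_multinet_line_sum_general A w onLine hplane k m hk cls hcover hdisj Z h1 h2 n h3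
end

section
/- Let alpha_1 = x, alpha_2 = y, alpha_3 = z, alpha_4 = x+y+z in C[x,y,z]. Then the kernel of the map C[y_1,y_2,y_3,y_4] -> C(x,y,z) sending y_i to 1/alpha_i is the principal ideal generated by y_2y_3y_4 + y_1y_3y_4 + y_1y_2y_4 - y_1y_2y_3, and this cubic polynomial is irreducible. -/
/-!
Singling out `y₄`, the cubic is `e₂ y₄ - e₃` with `e₂, e₃` the elementary symmetric polynomials in
`y₁, y₂, y₃`. These coefficients are coprime, so the cubic is irreducible, hence prime in the UFD
`ℂ[y₁, y₂, y₃][y₄]`. On `ℂ[y₁, y₂, y₃]` the map is injective, since `1/x, 1/y, 1/z` generate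
`ℂ(x, y, z)` and therefore form a transcendence basis. If `q` lies in the kernel, then
`e₂ ^ deg q • q(y₄)` is a polynomial in `e₂ y₄` vanishing at `e₂ y₄ = e₃`, so the cubic divides it,
and, being prime of positive degree in `y₄`, it divides `q`.
-/

open MvPolynomial

theorem IsTranscendenceBasis.inv {ι R K : Type*} [Finite ι] [CommRing R] [Nontrivial R]
    [Field K] [Algebra R K] {v : ι → K} (hv : IsTranscendenceBasis R v) :
    IsTranscendenceBasis R fun i => (v i)⁻¹ := by
  set S := Algebra.adjoin R (Set.range fun i => (v i)⁻¹)
  have : FaithfulSMul R K :=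
    (faithfulSMul_iff_algebraMap_injective R K).mpr hv.1.algebraMap_injective
  have : Algebra.IsAlgebraic S K :=
    hv.isAlgebraic_iff.mpr fun i => by
      simpa using (isAlgebraic_algebraMap (R := S) (A := K)
        ⟨(v i)⁻¹, Algebra.subset_adjoin ⟨i, rfl⟩⟩).inv
  exact Algebra.IsAlgebraic.isTranscendenceBasis_of_lift_le_trdeg_of_finite R _
    hv.lift_cardinalMk_eq_trdeg.le

theorem MvPolynomial.algebraicIndependent_inv_X (σ R : Type*) [Finite σ] [CommRing R]
    [IsDomain R] :
    AlgebraicIndependent R fun i : σ =>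
      (algebraMap (MvPolynomial σ R) (FractionRing (MvPolynomial σ R)) (X i))⁻¹ :=
  have := IsLocalization.isAlgebraic (FractionRing (MvPolynomial σ R))
    (nonZeroDivisors (MvPolynomial σ R))
  (IsTranscendenceBasis.mvPolynomial σ R).algebraMap_comp.inv.1

theorem MvPolynomial.isRelPrime_X_of_eval_ne_zero {σ R : Type*} [CommRing R] [IsDomain R]
    {p : MvPolynomial σ R} {i : σ} {x : σ → R} (hxi : x i = 0) (hp : eval x p ≠ 0) :
    IsRelPrime p (X i) :=
  (X_prime.irreducible.isRelPrime_iff_not_dvd.mpr fun ⟨q, hq⟩ => hp (by simp [hq, hxi])).symm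

namespace Polynomial

variable {A K : Type*} [CommRing A] [CommRing K] {τ : A →+* K}

theorem scaleRoots_comp_C_mul_X (q : A[X]) (c : A) :
    (q.scaleRoots c).comp (C c * X) = C c ^ q.natDegree * q := by
  ext k
  rw [comp_C_mul_X_coeff, coeff_scaleRoots, ← C_pow, coeff_C_mul]
  rcases le_or_gt k q.natDegree with hk | hk
  · rw [mul_assoc, pow_sub_mul_pow c hk, mul_comm]
  · simp [coeff_eq_zero_of_natDegree_lt hk]

theorem C_mul_X_add_C_dvd_C_pow_natDegree_mul (hτ : Function.Injective τ) {c b : A} {θ : K}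
    (hθ : τ c * θ + τ b = 0) {q : A[X]} (hq : q.eval₂ τ θ = 0) :
    C c * X + C b ∣ C c ^ q.natDegree * q := by
  have hroot : (q.scaleRoots c).IsRoot (-b) := by
    apply hτ.eq_iff.mp
    rw [map_zero, ← eval₂_at_apply, map_neg, ← eq_neg_of_add_eq_zero_left hθ,
      scaleRoots_eval₂_mul, hq, mul_zero]
  obtain ⟨r, hr⟩ := dvd_iff_isRoot.mpr hroot
  refine ⟨r.comp (C c * X), ?_⟩
  rw [← scaleRoots_comp_C_mul_X, hr, mul_comp]
  simp [sub_neg_eq_add]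

theorem ker_eval₂RingHom_eq_span_C_mul_X_add_C [IsDomain A] [UniqueFactorizationMonoid A]
    (hτ : Function.Injective τ) {c b : A} (hc : c ≠ 0) (hcb : IsRelPrime c b) {θ : K}
    (hθ : τ c * θ + τ b = 0) :
    RingHom.ker (eval₂RingHom τ θ) = Ideal.span {C c * X + C b} := by
  have hprime : Prime (C c * X + C b) := (irreducible_C_mul_X_add_C hc hcb).prime
  ext q
  rw [RingHom.mem_ker, Ideal.mem_span_singleton, coe_eval₂RingHom]
  refine ⟨fun hq => ?_, fun ⟨r, hr⟩ => by simp [hr, hθ]⟩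
  refine (hprime.dvd_or_dvd (C_mul_X_add_C_dvd_C_pow_natDegree_mul hτ hθ hq)).resolve_left ?_
  intro hdvd
  have := natDegree_le_of_dvd hdvd (by simpa using pow_ne_zero _ hc)
  rw [natDegree_linear hc, ← C_pow, natDegree_C] at this
  exact one_ne_zero (Nat.le_zero.mp this)

end Polynomial

section FourLines

variable {k : Type*} [Field k]

local notation "A" => MvPolynomial (Fin 3) k
local notation "K" => FractionRing (MvPolynomial (Fin 3) k)
local notation "e₂" => (X 0 * X 1 + X 0 * X 2 + X 1 * X 2 : MvPolynomial (Fin 3) k)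
local notation "e₃" => (X 0 * X 1 * X 2 : MvPolynomial (Fin 3) k)

noncomputable def lastVariableEquiv : MvPolynomial (Fin 4) k ≃ₐ[k] Polynomial A :=
  (renameEquiv k (finRotate 4)).trans (finSuccEquiv k 3)

@[simp]
theorem lastVariableEquiv_X (i : Fin 4) :
    lastVariableEquiv (X i : MvPolynomial (Fin 4) k) =
      ![Polynomial.C (X 0), Polynomial.C (X 1), Polynomial.C (X 2), Polynomial.X] i := by
  fin_cases i <;> simp [lastVariableEquiv, finSuccEquiv_apply] <;> rfl

@[simp]
theorem lastVariableEquiv_C (r : k) :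
    lastVariableEquiv (C r : MvPolynomial (Fin 4) k) = Polynomial.C (C r) :=
  lastVariableEquiv.commutes r

theorem lastVariableEquiv_relation :
    lastVariableEquiv (X 1 * X 2 * X 3 + X 0 * X 2 * X 3 + X 0 * X 1 * X 3 - X 0 * X 1 * X 2 :
        MvPolynomial (Fin 4) k) = Polynomial.C e₂ * Polynomial.X + Polynomial.C (-e₃) := by
  simp only [map_add, map_sub, map_mul, map_neg, lastVariableEquiv_X, Matrix.cons_val_zero,
    Matrix.cons_val_one, Matrix.cons_val]
  ring

noncomputable def invVarsHom : A →+* K :=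
  (aeval fun i => (algebraMap A K (X i))⁻¹ : A →ₐ[k] K)

theorem invVarsHom_injective : Function.Injective (invVarsHom (k := k)) :=
  algebraicIndependent_inv_X (Fin 3) k

theorem eval₂Hom_inv_eq_comp_lastVariableEquiv :
    eval₂Hom ((algebraMap A K).comp (algebraMap k A))
        (fun i => (algebraMap A K (![X 0, X 1, X 2, X 0 + X 1 + X 2] i))⁻¹) =
      (Polynomial.eval₂RingHom invVarsHom (algebraMap A K (X 0 + X 1 + X 2))⁻¹).comp
        lastVariableEquiv.toRingEquiv.toRingHom := by
  refine MvPolynomial.ringHom_ext (fun r => ?_) (fun i => ?_)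
  · simp [invVarsHom, IsScalarTower.algebraMap_apply k A K]
  · fin_cases i <;> simp [invVarsHom]

theorem isRelPrime_esymm_two_neg_esymm_three : IsRelPrime e₂ (-e₃) := by
  refine (IsRelPrime.mul_right (.mul_right ?_ ?_) ?_).neg_right
  · exact isRelPrime_X_of_eval_ne_zero (x := ![0, 1, 1]) rfl (by simp)
  · exact isRelPrime_X_of_eval_ne_zero (x := ![1, 0, 1]) rfl (by simp)
  · exact isRelPrime_X_of_eval_ne_zero (x := ![1, 1, 0]) rfl (by simp)

theorem esymm_two_ne_zero : e₂ ≠ 0 := fun h => by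
  simpa using congrArg (eval ![1, 1, 0]) h

theorem invVarsHom_esymm_relation :
    invVarsHom e₂ * (algebraMap A K (X 0 + X 1 + X 2))⁻¹ + invVarsHom (-e₃) = 0 := by
  have hX (i : Fin 3) : algebraMap A K (X i) ≠ 0 := by simp [X_ne_zero]
  have hsum : algebraMap A K (X 0 + X 1 + X 2) ≠ 0 := by
    refine (map_ne_zero_iff _ (IsFractionRing.injective A K)).mpr fun h => ?_
    simpa using congrArg (eval ![1, 0, 0]) h
  simp only [invVarsHom, AlgHom.coe_toRingHom, map_add, map_mul, map_neg, aeval_X] at hsum ⊢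
  field_simp
  ring

end FourLines

/-- Example 2.4: for `α₁ = x, α₂ = y, α₃ = z, α₄ = x+y+z`, the kernel of the
map `ℂ[y₁,y₂,y₃,y₄] → ℂ(x,y,z)`, `yᵢ ↦ 1/αᵢ`, is the principal ideal
generated by the cubic `y₂y₃y₄ + y₁y₃y₄ + y₁y₂y₄ - y₁y₂y₃`, and this cubic
is irreducible. -/
theorem OT_ideal_four_lines
    (α : Fin 4 → MvPolynomial (Fin 3) ℂ)
    (hα : α = ![MvPolynomial.X 0, MvPolynomial.X 1, MvPolynomial.X 2,
      MvPolynomial.X 0 + MvPolynomial.X 1 + MvPolynomial.X 2])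
    (g : MvPolynomial (Fin 4) ℂ)
    (hg : g = MvPolynomial.X 1 * MvPolynomial.X 2 * MvPolynomial.X 3
      + MvPolynomial.X 0 * MvPolynomial.X 2 * MvPolynomial.X 3
      + MvPolynomial.X 0 * MvPolynomial.X 1 * MvPolynomial.X 3
      - MvPolynomial.X 0 * MvPolynomial.X 1 * MvPolynomial.X 2) :
    RingHom.ker (MvPolynomial.eval₂Hom
      ((algebraMap (MvPolynomial (Fin 3) ℂ)
          (FractionRing (MvPolynomial (Fin 3) ℂ))).comp
        (algebraMap ℂ (MvPolynomial (Fin 3) ℂ)))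
      (fun i => (algebraMap (MvPolynomial (Fin 3) ℂ)
          (FractionRing (MvPolynomial (Fin 3) ℂ)) (α i))⁻¹))
      = Ideal.span {g} ∧ Irreducible g := by
  subst hα hg
  rw [eval₂Hom_inv_eq_comp_lastVariableEquiv, ← RingHom.comap_ker,
    Polynomial.ker_eval₂RingHom_eq_span_C_mul_X_add_C invVarsHom_injective esymm_two_ne_zero
      isRelPrime_esymm_two_neg_esymm_three invVarsHom_esymm_relation,
    ← lastVariableEquiv_relation]
  refine ⟨?_, (MulEquiv.irreducible_iff lastVariableEquiv).mp ?_⟩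
  · ext q
    rw [Ideal.mem_comap, Ideal.mem_span_singleton, Ideal.mem_span_singleton]
    exact map_dvd_iff lastVariableEquiv.toRingEquiv
  · rw [lastVariableEquiv_relation]
    exact Polynomial.irreducible_C_mul_X_add_C esymm_two_ne_zero
      isRelPrime_esymm_two_neg_esymm_three
end
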